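/- arXiv:2011.02080 — 5 statements merged into one kernel-verified Lean document; each statement's English description precedes it below -/
import Mathlib

section
/- For every γ with 0 ≤ γ < 1 and every r with (1+γ)/(3+γ) < r < 1, there exists a function f ∈ B(Ω_γ) with Taylor expansion f(z) = Σ_{n≥0} a_n z^n on 𝔻 such that Σ_{n≥0} |a_n| r^n + (8/9)·(S_{r(1-γ)}/π) > 1, where S_ρ is the area, counted with multiplicity, of the image of the disk 𝔻(0;ρ) under f. In other words, the radius (1+γ)/(3+γ) in the Bohr-type inequality Σ_{n≥0} |a_n| r^n + (8/9)·(S_{r(1-γ)}/π) ≤ 1 cannot be replaced by any larger number. -/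
/-!
The area term is nonnegative, so it suffices that the Bohr sum alone exceeds `1`. The affine map
`z ↦ (1 - γ) z + γ` sends `Ω_γ` onto the unit disk; composing it with the disk automorphism
`w ↦ (α - w) / (1 - α w)` gives `f ∈ B(Ω_γ)` of the form `f z = b - K z / (1 - c z)` with
`b, K, c ≥ 0` and `c r < 1`, whence `∑ |a n| r ^ n = b + K r / (1 - c r)`. This exceeds `1` iff
`bohrGap γ r α > 0`; the gap is affine in `α` and equals `(1 - γ) ((3 + γ) r - (1 + γ)) > 0` at
`α = 1`, so it is positive for `α < 1` close to `1`.
-/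

open Complex MeasureTheory

section GeomTail

variable {𝕜 : Type*} [NormedField 𝕜]

def geomTailCoeff (p K c : 𝕜) : ℕ → 𝕜
  | 0 => p
  | n + 1 => K * c ^ n

theorem hasSum_geomTailCoeff_mul_pow [CompleteSpace 𝕜] {p K c z : 𝕜} (h : ‖c * z‖ < 1) :
    HasSum (fun n => geomTailCoeff p K c n * z ^ n) (p + K * z / (1 - c * z)) := by
  have htail : HasSum (fun n => geomTailCoeff p K c (n + 1) * z ^ (n + 1))
      (K * z / (1 - c * z)) := by
    have hterm : (fun n => geomTailCoeff p K c (n + 1) * z ^ (n + 1))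
        = fun n => K * z * (c * z) ^ n := by
      funext n
      simp only [geomTailCoeff]
      ring
    rw [hterm, div_eq_mul_inv]
    exact (hasSum_geometric_of_norm_lt_one h).mul_left (K * z)
  have h0 := HasSum.zero_add (f := fun n => geomTailCoeff p K c n * z ^ n) htail
  rwa [pow_zero, mul_one] at h0

theorem norm_geomTailCoeff (p K c : 𝕜) (n : ℕ) :
    ‖geomTailCoeff p K c n‖ = geomTailCoeff ‖p‖ ‖K‖ ‖c‖ n := by
  cases n <;> simp [geomTailCoeff]

end GeomTail

open ComplexConjugate in
theorem norm_sub_div_one_sub_conj_mul_le_one {a w : ℂ} (ha : ‖a‖ ≤ 1) (hw : ‖w‖ ≤ 1) :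
    ‖(a - w) / (1 - conj a * w)‖ ≤ 1 := by
  have key : ‖1 - conj a * w‖ ^ 2 - ‖a - w‖ ^ 2 = (1 - ‖a‖ ^ 2) * (1 - ‖w‖ ^ 2) := by
    simp only [← normSq_eq_norm_sq, normSq_apply, sub_re, sub_im, one_re, one_im, mul_re, mul_im,
      conj_re, conj_im]
    ring
  have hprod : 0 ≤ (1 - ‖a‖ ^ 2) * (1 - ‖w‖ ^ 2) := by
    apply mul_nonneg <;> nlinarith [norm_nonneg a, norm_nonneg w]
  rw [norm_div]
  refine div_le_one_of_le₀ ?_ (norm_nonneg _)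
  exact (sq_le_sq₀ (norm_nonneg _) (norm_nonneg _)).1 (by linarith)

theorem norm_one_sub_mul_add_lt_one {γ : ℝ} (hγ : γ < 1) {z : ℂ}
    (hz : z ∈ Metric.ball (-(γ / (1 - γ)) : ℂ) (1 / (1 - γ))) :
    ‖(1 - γ) * z + γ‖ < 1 := by
  have hγ' : 0 < 1 - γ := sub_pos.2 hγ
  have hfac : (1 - γ) * z + γ = ((1 - γ : ℝ) : ℂ) * (z - -(γ / (1 - γ) : ℂ)) := by
    have : (1 - γ : ℂ) ≠ 0 := by exact_mod_cast hγ'.ne'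
    push_cast
    field_simp
    ring
  rw [hfac, norm_mul, norm_real, Real.norm_of_nonneg hγ'.le, ← dist_eq]
  calc (1 - γ) * dist z _ < (1 - γ) * (1 / (1 - γ)) := mul_lt_mul_of_pos_left hz hγ'
    _ = 1 := by field_simp

def bohrGap (γ r α : ℝ) : ℝ :=
  (1 - γ) * r * (1 + 2 * α + α * γ) - (1 + γ) * (1 - α * γ)

noncomputable def omegaExtremal (γ α : ℝ) (z : ℂ) : ℂ :=
  (α - ((1 - γ) * z + γ)) / (1 - α * ((1 - γ) * z + γ))

section OmegaExtremal

variable {γ α : ℝ}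

theorem norm_omegaExtremal_le_one (hγ : γ < 1) (hα : |α| ≤ 1) {z : ℂ}
    (hz : z ∈ Metric.ball (-(γ / (1 - γ)) : ℂ) (1 / (1 - γ))) :
    ‖omegaExtremal γ α z‖ ≤ 1 := by
  simpa only [omegaExtremal, conj_ofReal] using
    norm_sub_div_one_sub_conj_mul_le_one (a := α) (by rwa [norm_real, Real.norm_eq_abs])
      (norm_one_sub_mul_add_lt_one hγ hz).le

theorem differentiableOn_omegaExtremal (hγ : γ < 1) (hα : |α| ≤ 1) :
    DifferentiableOn ℂ (omegaExtremal γ α) (Metric.ball (-(γ / (1 - γ)) : ℂ) (1 / (1 - γ))) := by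
  refine DifferentiableOn.div (by fun_prop) (by fun_prop) fun z hz hzero => ?_
  have hlt : ‖(α : ℂ) * ((1 - γ) * z + γ)‖ < 1 := by
    rw [norm_mul, norm_real, Real.norm_eq_abs]
    exact lt_of_le_of_lt (mul_le_of_le_one_left (norm_nonneg _) hα)
      (norm_one_sub_mul_add_lt_one hγ hz)
  rw [← sub_eq_zero.1 hzero, norm_one] at hlt
  exact lt_irrefl _ hlt

theorem omegaExtremal_eq (hd : 1 - α * γ ≠ 0) {z : ℂ}
    (hz : 1 - ((α * (1 - γ) / (1 - α * γ) : ℝ) : ℂ) * z ≠ 0) :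
    omegaExtremal γ α z = ((α - γ) / (1 - α * γ) : ℝ) +
      (-((1 - α ^ 2) * (1 - γ) / (1 - α * γ) ^ 2 : ℝ) : ℂ) * z /
        (1 - ((α * (1 - γ) / (1 - α * γ) : ℝ) : ℂ) * z) := by
  have hd' : (1 - α * γ : ℂ) ≠ 0 := by exact_mod_cast hd
  have hw : 1 - ((α * (1 - γ) / (1 - α * γ) : ℝ) : ℂ) * z
      = (1 - α * ((1 - γ) * z + γ)) / (1 - α * γ) := by
    push_cast
    field_simp
    ring
  rw [hw] at hz ⊢
  have hden : 1 - α * ((1 - γ) * z + γ) ≠ 0 := (div_ne_zero_iff.1 hz).1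
  rw [omegaExtremal]
  push_cast
  field_simp
  ring

noncomputable def omegaExtremalCoeff (γ α : ℝ) : ℕ → ℂ :=
  geomTailCoeff ((α - γ) / (1 - α * γ) : ℝ) (-((1 - α ^ 2) * (1 - γ) / (1 - α * γ) ^ 2 : ℝ) : ℂ)
    ((α * (1 - γ) / (1 - α * γ) : ℝ) : ℂ)

theorem hasSum_omegaExtremalCoeff_mul_pow (hγ : γ < 1) (hα₀ : 0 ≤ α) (hα₁ : α < 1) {z : ℂ}
    (hz : ‖z‖ < 1) :
    HasSum (fun n => omegaExtremalCoeff γ α n * z ^ n) (omegaExtremal γ α z) := by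
  have hd : 0 < 1 - α * γ := by nlinarith
  have hc : ‖((α * (1 - γ) / (1 - α * γ) : ℝ) : ℂ) * z‖ < 1 := by
    have hc₀ : 0 ≤ α * (1 - γ) / (1 - α * γ) := div_nonneg (by nlinarith) hd.le
    have hc₁ : α * (1 - γ) / (1 - α * γ) < 1 := by rw [div_lt_one hd]; nlinarith
    rw [norm_mul, norm_real, Real.norm_of_nonneg hc₀]
    nlinarith [norm_nonneg z]
  have hz' : 1 - ((α * (1 - γ) / (1 - α * γ) : ℝ) : ℂ) * z ≠ 0 := by
    intro h
    rw [← sub_eq_zero.1 h, norm_one] at hc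
    exact lt_irrefl _ hc
  rw [omegaExtremal_eq hd.ne' hz']
  exact hasSum_geomTailCoeff_mul_pow hc

theorem one_lt_tsum_norm_omegaExtremalCoeff_mul_pow {r : ℝ} (hγ : 0 ≤ γ) (hγα : γ ≤ α)
    (hα : α < 1) (hr₀ : 0 ≤ r) (hr₁ : r < 1)
    (hgap : 0 < bohrGap γ r α) :
    1 < ∑' n, ‖omegaExtremalCoeff γ α n‖ * r ^ n := by
  have hd : 0 < 1 - α * γ := by nlinarith
  have hD : 0 < 1 - α * γ - α * (1 - γ) * r := by nlinarith [mul_nonneg hγ hr₀]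
  have hb : 0 ≤ (α - γ) / (1 - α * γ) := div_nonneg (by linarith) hd.le
  have hK : 0 ≤ (1 - α ^ 2) * (1 - γ) / (1 - α * γ) ^ 2 := div_nonneg (by nlinarith) (by positivity)
  have hc : 0 ≤ α * (1 - γ) / (1 - α * γ) := div_nonneg (by nlinarith) hd.le
  have hcr : α * (1 - γ) / (1 - α * γ) * r < 1 := by
    rw [div_mul_eq_mul_div, div_lt_one hd]; linarith
  have hsum := hasSum_geomTailCoeff_mul_pow (𝕜 := ℝ) (z := r)
    (p := (α - γ) / (1 - α * γ)) (K := (1 - α ^ 2) * (1 - γ) / (1 - α * γ) ^ 2)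
    (c := α * (1 - γ) / (1 - α * γ)) (by rwa [Real.norm_of_nonneg (mul_nonneg hc hr₀)])
  have hnorm : ∀ n, ‖omegaExtremalCoeff γ α n‖ = geomTailCoeff ((α - γ) / (1 - α * γ))
      ((1 - α ^ 2) * (1 - γ) / (1 - α * γ) ^ 2) (α * (1 - γ) / (1 - α * γ)) n := by
    intro n
    rw [omegaExtremalCoeff, norm_geomTailCoeff, norm_neg]
    simp only [norm_real, Real.norm_of_nonneg hb, Real.norm_of_nonneg hK, Real.norm_of_nonneg hc]
  simp only [hnorm, hsum.tsum_eq]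
  rw [← sub_pos]
  have key : (α - γ) / (1 - α * γ) + (1 - α ^ 2) * (1 - γ) / (1 - α * γ) ^ 2 * r /
      (1 - α * (1 - γ) / (1 - α * γ) * r) - 1 =
        (1 - α) * bohrGap γ r α / ((1 - α * γ) * (1 - α * γ - α * (1 - γ) * r)) := by
    rw [bohrGap]
    field_simp
    ring
  rw [key]
  have : 0 < 1 - α := sub_pos.2 hα
  positivity

end OmegaExtremal

open Filter Topology in
theorem exists_lt_one_bohrGap_pos {γ r : ℝ} (hγ₀ : 0 ≤ γ) (hγ₁ : γ < 1)
    (hr : (1 + γ) / (3 + γ) < r) :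
    ∃ α, γ < α ∧ α < 1 ∧ 0 < bohrGap γ r α := by
  have hgap₁ : 0 < bohrGap γ r 1 := by
    rw [div_lt_iff₀ (by linarith)] at hr
    simp only [bohrGap]
    nlinarith
  have hlim : Tendsto (bohrGap γ r) (𝓝[<] 1) (𝓝 (bohrGap γ r 1)) :=
    (show Continuous (bohrGap γ r) by unfold bohrGap; fun_prop).continuousWithinAt.tendsto
  obtain ⟨α, hα, hγα, hα₁⟩ :=
    ((hlim.eventually (lt_mem_nhds hgap₁)).and (Ioo_mem_nhdsLT hγ₁)).exists
  exact ⟨α, hγα, hα₁, hα⟩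

/-- **Sharpness in Theorem 1.** For `0 ≤ γ < 1` and any `r` with `(1+γ)/(3+γ) < r < 1`,
there is a function `f ∈ B(Ω_γ)` with expansion `Σ a_n z^n` on `𝔻` for which
`Σ |a_n| r^n + (8/9)(S_{r(1-γ)}/π) > 1`; hence the radius `(1+γ)/(3+γ)` is best possible. -/
theorem bohr_area_omega_gamma_sharp (γ : ℝ) (hγ₀ : 0 ≤ γ) (hγ₁ : γ < 1)
    (r : ℝ) (hr₀ : (1 + γ) / (3 + γ) < r) (hr₁ : r < 1) :
    ∃ (f : ℂ → ℂ) (a : ℕ → ℂ),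
      DifferentiableOn ℂ f (Metric.ball (-(γ / (1 - γ)) : ℂ) (1 / (1 - γ))) ∧
      (∀ z ∈ Metric.ball (-(γ / (1 - γ)) : ℂ) (1 / (1 - γ)), ‖f z‖ ≤ 1) ∧
      (∀ z ∈ Metric.ball (0 : ℂ) 1, HasSum (fun n => a n * z ^ n) (f z)) ∧
      1 < (∑' n : ℕ, ‖a n‖ * r ^ n)
        + (8 / 9) * ((∫ z in Metric.ball (0 : ℂ) (r * (1 - γ)),
            ‖deriv f z‖ ^ 2 ∂volume) / Real.pi) := by
  obtain ⟨α, hγα, hα₁, hgap⟩ := exists_lt_one_bohrGap_pos hγ₀ hγ₁ hr₀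
  have hα₀ : 0 ≤ α := by linarith
  have hα : |α| ≤ 1 := abs_le.2 ⟨by linarith, hα₁.le⟩
  have hr : 0 ≤ r := le_trans (by positivity) hr₀.le
  refine ⟨omegaExtremal γ α, omegaExtremalCoeff γ α, differentiableOn_omegaExtremal hγ₁ hα,
    fun z hz => norm_omegaExtremal_le_one hγ₁ hα hz,
    fun z hz => hasSum_omegaExtremalCoeff_mul_pow hγ₁ hα₀ hα₁ (mem_ball_zero_iff.1 hz), ?_⟩
  have harea : 0 ≤ (8 / 9) * ((∫ z in Metric.ball (0 : ℂ) (r * (1 - γ)),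
      ‖deriv (omegaExtremal γ α) z‖ ^ 2 ∂volume) / Real.pi) :=
    mul_nonneg (by norm_num) (div_nonneg (integral_nonneg fun _ => by positivity) Real.pi_pos.le)
  linarith [one_lt_tsum_norm_omegaExtremalCoeff_mul_pow hγ₀ hγα.le hα₁ hr hr₁ hgap]
end

section
/- For every γ with 0 ≤ γ < 1 and every r with (1+γ)/(3+γ) < r < 1, there exists a function f ∈ B(Ω_γ) with Taylor expansion f(z) = Σ_{n≥0} a_n z^n on 𝔻 such that Σ_{n≥0} |a_n| r^n + (1/(1+|a_0|) + r/(1-r)) · Σ_{n≥1} |a_n|² r^{2n} > 1. In other words, the radius (1+γ)/(3+γ) in this refined Bohr inequality cannot be improved. -/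
open Complex ComplexConjugate Topology

/-!
The affine map `z ↦ γ + (1 - γ) z` sends `Ω_γ` onto the unit disk, so for real `|a| < 1` the
composite `f = φ_a(γ + (1 - γ) z)` with the disk automorphism `φ_a(w) = (a - w) / (1 - a w)`
lies in `B(Ω_γ)`. It is a linear fractional map, so its Taylor coefficients are geometric from
index one on and its majorant series `Σ |a_n| r^n` has a closed form. That closed form minus `1`
is `(1 - a)` times a positive multiple of a function of `a` whose value at `a = 1` is
`(1 - γ)((3 + γ) r - (1 + γ)) > 0`, so the majorant series exceeds `1` for `a` close to `1`.
The refined quantity only adds a nonnegative term to it.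
-/

section LinearFractional

variable {𝕜 : Type*} [NormedField 𝕜]

def linFracCoeff (p s t : 𝕜) : ℕ → 𝕜
  | 0 => p
  | n + 1 => (p * t - s) * t ^ n

theorem hasSum_linFracCoeff_mul_pow (p s t : 𝕜) {z : 𝕜} (hz : ‖t * z‖ < 1) :
    HasSum (fun n => linFracCoeff p s t n * z ^ n) ((p - s * z) / (1 - t * z)) := by
  have hne : 1 - t * z ≠ 0 := fun h => by
    rw [← eq_of_sub_eq_zero h, norm_one] at hz
    exact hz.false
  have hval : (p - s * z) / (1 - t * z) - linFracCoeff p s t 0 * z ^ 0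
      = (p * t - s) * z * (1 - t * z)⁻¹ := by
    rw [linFracCoeff, pow_zero, mul_one, div_sub' hne]
    ring
  have hterm (n : ℕ) :
      linFracCoeff p s t (n + 1) * z ^ (n + 1) = (p * t - s) * z * (t * z) ^ n := by
    rw [linFracCoeff]
    ring
  rw [← hasSum_nat_add_iff' 1, Finset.sum_range_one, hval]
  simpa only [hterm] using (hasSum_geometric_of_norm_lt_one hz).mul_left ((p * t - s) * z)

theorem hasSum_norm_linFracCoeff_mul_pow (p s t : 𝕜) {r : ℝ} (hr : 0 ≤ r)
    (htr : ‖t‖ * r < 1) :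
    HasSum (fun n => ‖linFracCoeff p s t n‖ * r ^ n)
      (‖p‖ + ‖p * t - s‖ * r / (1 - ‖t‖ * r)) := by
  have hval : ‖p‖ + ‖p * t - s‖ * r / (1 - ‖t‖ * r) - ‖linFracCoeff p s t 0‖ * r ^ 0
      = ‖p * t - s‖ * r * (1 - ‖t‖ * r)⁻¹ := by
    rw [linFracCoeff]
    ring
  have hterm (n : ℕ) :
      ‖linFracCoeff p s t (n + 1)‖ * r ^ (n + 1) = ‖p * t - s‖ * r * (‖t‖ * r) ^ n := by
    rw [linFracCoeff, norm_mul, norm_pow]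
    ring
  rw [← hasSum_nat_add_iff' 1, Finset.sum_range_one, hval]
  simpa only [hterm] using
    (hasSum_geometric_of_lt_one (by positivity) htr).mul_left (‖p * t - s‖ * r)

end LinearFractional

theorem Complex.norm_sub_lt_norm_one_sub_conj_mul {a w : ℂ} (ha : ‖a‖ < 1) (hw : ‖w‖ < 1) :
    ‖a - w‖ < ‖1 - conj a * w‖ := by
  have key : normSq (1 - conj a * w) = normSq (a - w) + (1 - normSq a) * (1 - normSq w) := by
    simp only [normSq_apply, sub_re, sub_im, mul_re, mul_im, conj_re, conj_im, one_re, one_im]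
    ring
  have ha' : normSq a < 1 := by rw [normSq_eq_norm_sq]; nlinarith [norm_nonneg a]
  have hw' : normSq w < 1 := by rw [normSq_eq_norm_sq]; nlinarith [norm_nonneg w]
  rw [← sq_lt_sq₀ (norm_nonneg _) (norm_nonneg _), ← normSq_eq_norm_sq, ← normSq_eq_norm_sq, key]
  nlinarith [mul_pos (sub_pos.2 ha') (sub_pos.2 hw')]

theorem Complex.norm_div_one_sub_conj_mul_lt_one {a w : ℂ} (ha : ‖a‖ < 1) (hw : ‖w‖ < 1) :
    ‖(a - w) / (1 - conj a * w)‖ < 1 := by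
  have h := norm_sub_lt_norm_one_sub_conj_mul ha hw
  rwa [norm_div, div_lt_one ((norm_nonneg _).trans_lt h)]

theorem norm_add_mul_lt_one_of_mem_ball {γ : ℝ} (hγ : γ < 1) {z : ℂ}
    (hz : z ∈ Metric.ball (-(γ / (1 - γ)) : ℂ) (1 / (1 - γ))) :
    ‖(γ : ℂ) + (1 - γ) * z‖ < 1 := by
  have hc : 0 < 1 - γ := sub_pos.2 hγ
  have hc' : (1 : ℂ) - γ ≠ 0 := by exact_mod_cast hc.ne'
  rw [Metric.mem_ball, dist_eq, lt_div_iff₀ hc] at hz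
  have : (γ : ℂ) + (1 - γ) * z = ((1 - γ : ℝ) : ℂ) * (z - -(γ / (1 - γ))) := by
    push_cast; field_simp; ring
  rwa [this, norm_mul, norm_real, Real.norm_of_nonneg hc.le, mul_comm]

noncomputable section

-- `conj` is the identity on the real parameter `a`; it puts `bohrExtremal` in the form of
-- `Complex.norm_div_one_sub_conj_mul_lt_one`.
def bohrExtremal (γ a : ℝ) (z : ℂ) : ℂ :=
  (a - (γ + (1 - γ) * z)) / (1 - conj (a : ℂ) * (γ + (1 - γ) * z))

def bohrExtremalCoeff (γ a : ℝ) : ℕ → ℂ :=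
  linFracCoeff (((a - γ) / (1 - a * γ) : ℝ) : ℂ) (((1 - γ) / (1 - a * γ) : ℝ) : ℂ)
    ((a * (1 - γ) / (1 - a * γ) : ℝ) : ℂ)

def bohrExtremalMajorant (γ a r : ℝ) : ℝ :=
  (a - γ) / (1 - a * γ) + (1 - a ^ 2) * (1 - γ) / (1 - a * γ) ^ 2 * r
    / (1 - a * (1 - γ) / (1 - a * γ) * r)

end

section Extremal

variable {γ a : ℝ}

theorem differentiableOn_bohrExtremal (hγ : γ < 1) (ha : |a| < 1) :
    DifferentiableOn ℂ (bohrExtremal γ a) (Metric.ball (-(γ / (1 - γ)) : ℂ) (1 / (1 - γ))) := by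
  refine DifferentiableOn.div (by fun_prop) (by fun_prop) fun z hz => ?_
  have h := norm_sub_lt_norm_one_sub_conj_mul (by rwa [norm_real, Real.norm_eq_abs])
    (norm_add_mul_lt_one_of_mem_ball hγ hz)
  exact norm_pos_iff.mp ((norm_nonneg _).trans_lt h)

theorem norm_bohrExtremal_lt_one (hγ : γ < 1) (ha : |a| < 1) {z : ℂ}
    (hz : z ∈ Metric.ball (-(γ / (1 - γ)) : ℂ) (1 / (1 - γ))) :
    ‖bohrExtremal γ a z‖ < 1 :=
  norm_div_one_sub_conj_mul_lt_one (by rwa [norm_real, Real.norm_eq_abs])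
    (norm_add_mul_lt_one_of_mem_ball hγ hz)

theorem hasSum_bohrExtremalCoeff_mul_pow (hγ₀ : 0 ≤ γ) (hγ₁ : γ < 1) (ha₀ : 0 ≤ a) (ha₁ : a < 1)
    {z : ℂ} (hz : ‖z‖ < 1) :
    HasSum (fun n => bohrExtremalCoeff γ a n * z ^ n) (bohrExtremal γ a z) := by
  have hB : 0 < 1 - a * γ := by nlinarith
  have ht₀ : 0 ≤ a * (1 - γ) / (1 - a * γ) := by
    have : 0 ≤ 1 - γ := by linarith
    positivity
  have ht₁ : a * (1 - γ) / (1 - a * γ) < 1 := by rw [div_lt_one hB]; linarith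
  have htz : ‖((a * (1 - γ) / (1 - a * γ) : ℝ) : ℂ) * z‖ < 1 := by
    rw [norm_mul, norm_real, Real.norm_of_nonneg ht₀]
    nlinarith [norm_nonneg z]
  have hB' : (1 : ℂ) - a * γ ≠ 0 := by exact_mod_cast hB.ne'
  have hf : bohrExtremal γ a z
      = ((((a - γ) / (1 - a * γ) : ℝ) : ℂ) - (((1 - γ) / (1 - a * γ) : ℝ) : ℂ) * z)
        / (1 - ((a * (1 - γ) / (1 - a * γ) : ℝ) : ℂ) * z) := by
    rw [bohrExtremal, conj_ofReal, ← div_div_div_cancel_right₀ hB']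
    push_cast
    congr 1 <;> field_simp <;> ring
  rw [hf]
  exact hasSum_linFracCoeff_mul_pow _ _ _ htz

theorem hasSum_norm_bohrExtremalCoeff_mul_pow (hγ₀ : 0 ≤ γ) (hγa : γ ≤ a) (ha₁ : a < 1) {r : ℝ}
    (hr₀ : 0 ≤ r) (hr₁ : r < 1) :
    HasSum (fun n => ‖bohrExtremalCoeff γ a n‖ * r ^ n) (bohrExtremalMajorant γ a r) := by
  have hB : 0 < 1 - a * γ := by nlinarith
  have hp : ‖(((a - γ) / (1 - a * γ) : ℝ) : ℂ)‖ = (a - γ) / (1 - a * γ) := by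
    rw [norm_real, Real.norm_of_nonneg (div_nonneg (sub_nonneg.2 hγa) hB.le)]
  have hpts : ‖(((a - γ) / (1 - a * γ) : ℝ) : ℂ) * ((a * (1 - γ) / (1 - a * γ) : ℝ) : ℂ)
      - (((1 - γ) / (1 - a * γ) : ℝ) : ℂ)‖ = (1 - a ^ 2) * (1 - γ) / (1 - a * γ) ^ 2 := by
    have hval : (a - γ) / (1 - a * γ) * (a * (1 - γ) / (1 - a * γ)) - (1 - γ) / (1 - a * γ)
        = -((1 - a ^ 2) * (1 - γ) / (1 - a * γ) ^ 2) := by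
      field_simp
      ring
    have h1 : 0 ≤ 1 - a ^ 2 := by nlinarith
    have h2 : 0 ≤ 1 - γ := by linarith
    rw [← ofReal_mul, ← ofReal_sub, hval, norm_real, norm_neg, Real.norm_of_nonneg (by positivity)]
  have ht : ‖((a * (1 - γ) / (1 - a * γ) : ℝ) : ℂ)‖ = a * (1 - γ) / (1 - a * γ) := by
    have : 0 ≤ a * (1 - γ) := mul_nonneg (hγ₀.trans hγa) (by linarith)
    rw [norm_real, Real.norm_of_nonneg (by positivity)]
  have htr : a * (1 - γ) / (1 - a * γ) * r < 1 := by
    have : a * (1 - γ) / (1 - a * γ) ≤ 1 := by rw [div_le_one hB]; linarith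
    nlinarith
  have h := hasSum_norm_linFracCoeff_mul_pow (((a - γ) / (1 - a * γ) : ℝ) : ℂ)
    (((1 - γ) / (1 - a * γ) : ℝ) : ℂ) ((a * (1 - γ) / (1 - a * γ) : ℝ) : ℂ) hr₀ (by rwa [ht])
  rwa [hp, hpts, ht] at h

end Extremal

theorem one_lt_bohrExtremalMajorant {γ a r : ℝ} (hγ₀ : 0 ≤ γ) (hγ₁ : γ < 1) (ha : a < 1)
    (hr₀ : 0 ≤ r) (hr₁ : r < 1)
    (h : (1 + γ) * (1 - a * γ - a * (1 - γ) * r) < (1 + a) * (1 - γ) * r) :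
    1 < bohrExtremalMajorant γ a r := by
  have hB : 0 < 1 - a * γ := by nlinarith
  have hD : 0 < 1 - a * γ - a * (1 - γ) * r := by nlinarith [mul_nonneg hr₀ (sub_nonneg.2 hγ₁.le)]
  have key : bohrExtremalMajorant γ a r - 1
      = (1 - a) * ((1 + a) * (1 - γ) * r - (1 + γ) * (1 - a * γ - a * (1 - γ) * r))
        / ((1 - a * γ) * (1 - a * γ - a * (1 - γ) * r)) := by
    rw [bohrExtremalMajorant]
    field_simp
    ring
  have : 0 < bohrExtremalMajorant γ a r - 1 := by
    rw [key]
    exact div_pos (mul_pos (sub_pos.2 ha) (sub_pos.2 h)) (mul_pos hB hD)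
  linarith

theorem exists_one_lt_bohrExtremalMajorant {γ r : ℝ} (hγ₀ : 0 ≤ γ) (hγ₁ : γ < 1)
    (hr : (1 + γ) / (3 + γ) < r) (hr₁ : r < 1) :
    ∃ a, γ < a ∧ a < 1 ∧ 1 < bohrExtremalMajorant γ a r := by
  have hr₀ : 0 < r := lt_trans (by positivity) hr
  rw [div_lt_iff₀ (by linarith)] at hr
  have hat1 : (1 + γ) * (1 - 1 * γ - 1 * (1 - γ) * r) < (1 + 1) * (1 - γ) * r := by
    nlinarith [mul_pos (sub_pos.2 hγ₁) (sub_pos.2 hr)]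
  have hev : ∀ᶠ a in 𝓝 (1 : ℝ),
      (1 + γ) * (1 - a * γ - a * (1 - γ) * r) < (1 + a) * (1 - γ) * r :=
    ContinuousAt.eventually_lt (by fun_prop) (by fun_prop) hat1
  obtain ⟨a, hlt, hγa, ha⟩ :=
    ((hev.filter_mono nhdsWithin_le_nhds).and (Ioo_mem_nhdsLT hγ₁)).exists
  exact ⟨a, hγa, ha, one_lt_bohrExtremalMajorant hγ₀ hγ₁ ha hr₀.le hr₁ hlt⟩

/-- **Sharpness in Theorem 2.** For `0 ≤ γ < 1` and any `r` with `(1+γ)/(3+γ) < r < 1`,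
there is `f ∈ B(Ω_γ)` with expansion `Σ a_n z^n` on `𝔻` such that
`Σ |a_n| r^n + (1/(1+|a_0|) + r/(1-r)) · Σ_{n≥1} |a_n|² r^{2n} > 1`;
hence the radius `(1+γ)/(3+γ)` cannot be improved. -/
theorem bohr_refined_omega_gamma_sharp (γ : ℝ) (hγ₀ : 0 ≤ γ) (hγ₁ : γ < 1)
    (r : ℝ) (hr₀ : (1 + γ) / (3 + γ) < r) (hr₁ : r < 1) :
    ∃ (f : ℂ → ℂ) (a : ℕ → ℂ),
      DifferentiableOn ℂ f (Metric.ball (-(γ / (1 - γ)) : ℂ) (1 / (1 - γ))) ∧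
      (∀ z ∈ Metric.ball (-(γ / (1 - γ)) : ℂ) (1 / (1 - γ)), ‖f z‖ ≤ 1) ∧
      (∀ z ∈ Metric.ball (0 : ℂ) 1, HasSum (fun n => a n * z ^ n) (f z)) ∧
      1 < (∑' n : ℕ, ‖a n‖ * r ^ n)
        + (1 / (1 + ‖a 0‖) + r / (1 - r))
          * (∑' n : ℕ, ‖a (n + 1)‖ ^ 2 * r ^ (2 * (n + 1))) := by
  have hr : 0 < r := lt_trans (by positivity) hr₀
  obtain ⟨a, hγa, ha₁, hmajorant⟩ := exists_one_lt_bohrExtremalMajorant hγ₀ hγ₁ hr₀ hr₁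
  have ha : |a| < 1 := abs_lt.2 ⟨by linarith, ha₁⟩
  refine ⟨bohrExtremal γ a, bohrExtremalCoeff γ a, differentiableOn_bohrExtremal hγ₁ ha,
    fun z hz => (norm_bohrExtremal_lt_one hγ₁ ha hz).le,
    fun z hz => hasSum_bohrExtremalCoeff_mul_pow hγ₀ hγ₁ (hγ₀.trans hγa.le) ha₁
      (mem_ball_zero_iff.1 hz), ?_⟩
  have hweight : 0 ≤ 1 / (1 + ‖bohrExtremalCoeff γ a 0‖) + r / (1 - r) := by
    have := sub_pos.2 hr₁
    positivity
  have hsquares : 0 ≤ ∑' n : ℕ, ‖bohrExtremalCoeff γ a (n + 1)‖ ^ 2 * r ^ (2 * (n + 1)) :=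
    tsum_nonneg fun n => by positivity
  rw [(hasSum_norm_bohrExtremalCoeff_mul_pow hγ₀ hγa.le ha₁ hr.le hr₁).tsum_eq]
  exact lt_add_of_lt_of_nonneg hmajorant (mul_nonneg hweight hsquares)
end

section
/- For every real K with 0 ≤ K ≤ 8/9, every γ with 0 ≤ γ < 1, and every x with 0 ≤ x ≤ 1, one has 1 + 2K·A(γ)²·(1-x²) - 2/(1+x) ≤ 0, where A(γ) = (3+γ)(1-γ²)/((3+γ)² - (1-γ²)²). -/
/-- For `0 ≤ K ≤ 8/9`, `0 ≤ γ < 1` and `0 ≤ x ≤ 1`,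
`1 + 2K·A(γ)²·(1-x²) - 2/(1+x) ≤ 0`, where
`A(γ) = (3+γ)(1-γ²)/((3+γ)² - (1-γ²)²)`. -/
theorem F_nonpos (K : ℝ) (hK₀ : 0 ≤ K) (hK₁ : K ≤ 8 / 9)
    (γ : ℝ) (hγ₀ : 0 ≤ γ) (hγ₁ : γ < 1)
    (x : ℝ) (hx₀ : 0 ≤ x) (hx₁ : x ≤ 1) :
    1 + 2 * K * ((3 + γ) * (1 - γ ^ 2) / ((3 + γ) ^ 2 - (1 - γ ^ 2) ^ 2)) ^ 2 * (1 - x ^ 2)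
      - 2 / (1 + x) ≤ 0 := by
  set A : ℝ := (3 + γ) * (1 - γ ^ 2) / ((3 + γ) ^ 2 - (1 - γ ^ 2) ^ 2) with hAdef
  have hD : (0:ℝ) < (3 + γ) ^ 2 - (1 - γ ^ 2) ^ 2 := by
    have h1 : (0:ℝ) < 4 + γ - γ ^ 2 := by nlinarith
    have h2 : (0:ℝ) < 2 + γ + γ ^ 2 := by positivity
    nlinarith [mul_pos h1 h2]
  have hN : (0:ℝ) ≤ (3 + γ) * (1 - γ ^ 2) := by nlinarith
  have hA0 : 0 ≤ A := div_nonneg hN hD.le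
  have hA1 : A ≤ 3 / 8 := by
    rw [hAdef, div_le_iff₀ hD]
    nlinarith [sq_nonneg γ, sq_nonneg (1 - γ), sq_nonneg (γ * (1 - γ))]
  have h1x : (0:ℝ) < 1 + x := by linarith
  have hA2 : A ^ 2 ≤ 9 / 64 := by nlinarith
  have hc0 : 0 ≤ 2 * K * A ^ 2 := by positivity
  have hc : 2 * K * A ^ 2 ≤ 1 / 4 := by nlinarith
  have hfac : 0 ≤ (1 - x) * (1 - 2 * K * A ^ 2 * (1 + x) ^ 2) := by
    apply mul_nonneg (by linarith)
    nlinarith [sq_nonneg (1 + x)]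
  have key : 1 + 2 * K * A ^ 2 * (1 - x ^ 2) ≤ 2 / (1 + x) := by
    rw [le_div_iff₀ h1x]
    nlinarith [hfac]
  linarith
end

section
/- For every γ with 0 ≤ γ < 1, every a with 0 ≤ a ≤ 1, and every r with 0 ≤ r ≤ (1+γ)/(3+γ), one has a + ((1-a²)/(1+γ))·(r/(1-r)) + (1/(1+a) + r/(1-r))·((1-a²)/(1+γ))²·(r²/(1-r²)) ≤ 1. -/
/-! With `x = (1 - a²)/(1 + γ) · r/(1 - r)` the left-hand side equals
`a + x + x² (1 + a r)/((1 + a)(1 + r)) ≤ a + x + x²/(1 + a)`, and the bound on `r` says exactly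
`r/(1 - r) ≤ (1 + γ)/2`, i.e. `x ≤ (1 - a²)/2`. The bound is increasing in `x ≥ 0`, and at `x = (1 - a²)/2` it reads
`1 - (1 - a)³/4 ≤ 1`. -/

theorem add_mul_add_mul_sq_eq {a r : ℝ} (c : ℝ) (ha : 1 + a ≠ 0) (hr₁ : 1 - r ≠ 0)
    (hr₂ : 1 + r ≠ 0) :
    a + c * (r / (1 - r)) + (1 / (1 + a) + r / (1 - r)) * c ^ 2 * (r ^ 2 / (1 - r ^ 2))
      = a + c * (r / (1 - r)) + (c * (r / (1 - r))) ^ 2 * (1 + a * r) / ((1 + a) * (1 + r)) := by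
  rw [show (1 : ℝ) - r ^ 2 = (1 - r) * (1 + r) by ring]
  field_simp
  ring

theorem div_one_sub_le_of_le_div {γ r : ℝ} (hγ : -3 < γ) (hr : r ≤ (1 + γ) / (3 + γ)) :
    r / (1 - r) ≤ (1 + γ) / 2 := by
  have h3 : 0 < 3 + γ := by linarith
  have hr' : r * (3 + γ) ≤ 1 + γ := (le_div_iff₀ h3).1 hr
  have hr_lt : r < 1 := hr.trans_lt ((div_lt_one h3).2 (by linarith))
  rw [div_le_div_iff₀ (by linarith) two_pos]
  linarith

theorem sq_mul_div_le_sq_div {a r : ℝ} (x : ℝ) (ha₀ : -1 < a) (ha₁ : a ≤ 1) (hr : 0 ≤ r) :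
    x ^ 2 * (1 + a * r) / ((1 + a) * (1 + r)) ≤ x ^ 2 / (1 + a) := by
  rw [mul_comm (1 + a), ← div_div]
  refine div_le_div_of_nonneg_right ?_ (by linarith)
  rw [mul_div_assoc]
  exact mul_le_of_le_one_right (sq_nonneg x)
    ((div_le_one₀ (by linarith : (0 : ℝ) < 1 + r)).2 (by nlinarith))

theorem add_add_sq_div_le_one {a x : ℝ} (ha₀ : -1 < a) (ha₁ : a ≤ 1) (hx₀ : 0 ≤ x)
    (hx : x ≤ (1 - a ^ 2) / 2) :
    a + x + x ^ 2 / (1 + a) ≤ 1 := by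
  have hsq : x ^ 2 / (1 + a) ≤ x * (1 - a) / 2 := by
    rw [div_le_iff₀ (by linarith)]
    nlinarith [mul_le_mul_of_nonneg_left hx hx₀]
  nlinarith [mul_le_mul_of_nonneg_right hx (by linarith : (0 : ℝ) ≤ 3 - a),
    pow_nonneg (by linarith : (0 : ℝ) ≤ 1 - a) 3]

theorem u_le_one_general (γ : ℝ) (hγ₀ : 0 ≤ γ)
    (a : ℝ) (ha₀ : 0 ≤ a) (ha₁ : a ≤ 1)
    (r : ℝ) (hr₀ : 0 ≤ r) (hr₁ : r ≤ (1 + γ) / (3 + γ)) :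
    a + ((1 - a ^ 2) / (1 + γ)) * (r / (1 - r))
      + (1 / (1 + a) + r / (1 - r)) * ((1 - a ^ 2) / (1 + γ)) ^ 2 * (r ^ 2 / (1 - r ^ 2))
      ≤ 1 := by
  have hr_div : r / (1 - r) ≤ (1 + γ) / 2 := div_one_sub_le_of_le_div (by linarith) hr₁
  have hr_lt : r < 1 := hr₁.trans_lt ((div_lt_one (by linarith)).2 (by linarith))
  have ha_sq : 0 ≤ 1 - a ^ 2 := by nlinarith
  rw [add_mul_add_mul_sq_eq _ (by linarith) (by linarith) (by linarith)]
  set x := (1 - a ^ 2) / (1 + γ) * (r / (1 - r))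
  have hx₀ : 0 ≤ x := mul_nonneg (by positivity) (div_nonneg hr₀ (by linarith))
  have hx : x ≤ (1 - a ^ 2) / 2 :=
    calc x ≤ (1 - a ^ 2) / (1 + γ) * ((1 + γ) / 2) :=
        mul_le_mul_of_nonneg_left hr_div (by positivity)
      _ = (1 - a ^ 2) / 2 := by field_simp
  calc a + x + x ^ 2 * (1 + a * r) / ((1 + a) * (1 + r))
      ≤ a + x + x ^ 2 / (1 + a) :=
        (add_le_add_iff_left _).2 (sq_mul_div_le_sq_div x (by linarith) ha₁ hr₀)
    _ ≤ 1 := add_add_sq_div_le_one (by linarith) ha₁ hx₀ hx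

/-- For `0 ≤ γ < 1`, `0 ≤ a ≤ 1` and `0 ≤ r ≤ (1+γ)/(3+γ)`,
`a + ((1-a²)/(1+γ))·r/(1-r) + (1/(1+a) + r/(1-r))·((1-a²)/(1+γ))²·r²/(1-r²) ≤ 1`. -/
theorem u_le_one (γ : ℝ) (hγ₀ : 0 ≤ γ) (hγ₁ : γ < 1)
    (a : ℝ) (ha₀ : 0 ≤ a) (ha₁ : a ≤ 1)
    (r : ℝ) (hr₀ : 0 ≤ r) (hr₁ : r ≤ (1 + γ) / (3 + γ)) :
    a + ((1 - a ^ 2) / (1 + γ)) * (r / (1 - r))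
      + (1 / (1 + a) + r / (1 - r)) * ((1 - a ^ 2) / (1 + γ)) ^ 2 * (r ^ 2 / (1 - r ^ 2))
      ≤ 1 :=
  u_le_one_general γ hγ₀ a ha₀ ha₁ r hr₀ hr₁
end

section
/- For every real λ > 0, every a with 0 ≤ a ≤ 1, and every r with 0 ≤ r ≤ 1/(1+2λ), one has a + λ(1-a²)·r/(1-r) + 2·((1+λ)/(1+2λ))²·λ²(1-a²)²·r²/(1-r²)² ≤ 1. -/
/-- For `λ > 0`, `0 ≤ a ≤ 1` and `0 ≤ r ≤ 1/(1+2λ)`,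
`a + λ(1-a²)·r/(1-r) + 2((1+λ)/(1+2λ))²·λ²(1-a²)²·r²/(1-r²)² ≤ 1`. -/
theorem B1_bound (lam : ℝ) (hlam : 0 < lam)
    (a : ℝ) (ha₀ : 0 ≤ a) (ha₁ : a ≤ 1)
    (r : ℝ) (hr₀ : 0 ≤ r) (hr₁ : r ≤ 1 / (1 + 2 * lam)) :
    a + lam * (1 - a ^ 2) * (r / (1 - r))
      + 2 * ((1 + lam) / (1 + 2 * lam)) ^ 2 * lam ^ 2 * (1 - a ^ 2) ^ 2
        * (r ^ 2 / (1 - r ^ 2) ^ 2) ≤ 1 := by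
  have hl0 : (0:ℝ) < 1 + 2 * lam := by linarith
  have hr1' : r * (1 + 2 * lam) ≤ 1 := (le_div_iff₀ hl0).mp hr₁
  have hrlt : r < 1 := lt_of_le_of_lt hr₁ (by rw [div_lt_one hl0]; linarith)
  have h1r : 0 < 1 - r := by linarith
  have h1r2 : 0 < 1 - r ^ 2 := by nlinarith
  have H2 : r / (1 - r) ≤ 1 / (2 * lam) := by
    rw [div_le_div_iff₀ h1r (by positivity)]
    nlinarith
  have H3 : r / (1 - r ^ 2) ≤ (1 + 2 * lam) / (4 * lam * (1 + lam)) := by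
    rw [div_le_div_iff₀ h1r2 (by positivity)]
    nlinarith [mul_nonneg (sub_nonneg.mpr hr1')
      (by positivity : (0:ℝ) ≤ r * (1 + 2 * lam) + (1 + 2 * lam) ^ 2)]
  have H3sq : r ^ 2 / (1 - r ^ 2) ^ 2 ≤ ((1 + 2 * lam) / (4 * lam * (1 + lam))) ^ 2 := by
    rw [← div_pow]
    exact pow_le_pow_left₀ (by positivity) H3 2
  have hu : 0 ≤ 1 - a ^ 2 := by nlinarith
  have T2 : lam * (1 - a ^ 2) * (r / (1 - r)) ≤ (1 - a ^ 2) / 2 := by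
    calc lam * (1 - a ^ 2) * (r / (1 - r)) ≤ lam * (1 - a ^ 2) * (1 / (2 * lam)) := by
          exact mul_le_mul_of_nonneg_left H2 (by positivity)
      _ = (1 - a ^ 2) / 2 := by field_simp
  have T3 : 2 * ((1 + lam) / (1 + 2 * lam)) ^ 2 * lam ^ 2 * (1 - a ^ 2) ^ 2
      * (r ^ 2 / (1 - r ^ 2) ^ 2) ≤ (1 - a ^ 2) ^ 2 / 8 := by
    calc 2 * ((1 + lam) / (1 + 2 * lam)) ^ 2 * lam ^ 2 * (1 - a ^ 2) ^ 2
        * (r ^ 2 / (1 - r ^ 2) ^ 2)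
        ≤ 2 * ((1 + lam) / (1 + 2 * lam)) ^ 2 * lam ^ 2 * (1 - a ^ 2) ^ 2
          * ((1 + 2 * lam) / (4 * lam * (1 + lam))) ^ 2 :=
          mul_le_mul_of_nonneg_left H3sq (by positivity)
      _ = (1 - a ^ 2) ^ 2 / 8 := by field_simp; ring
  have key : a + (1 - a ^ 2) / 2 + (1 - a ^ 2) ^ 2 / 8 ≤ 1 := by
    nlinarith [mul_nonneg (pow_nonneg (by linarith : (0:ℝ) ≤ 1 - a) 3)
      (by linarith : (0:ℝ) ≤ a + 3)]
  linarith
end
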